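/- Let K be a field of characteristic zero, let A, B, p, q ∈ K be nonzero with p ≠ q, and define the Ward–Horadam sequence H by H_n = A·p^n + B·q^n. Assume H_n ≠ 0 for all n ≥ 1. Fix integers r, s ≥ 1 and elements h₁, h₂ ∈ K. Then H_{r+s} = h₁·H_r + h₂·H_s holds if and only if the H-binomial recurrence C_H(r+s, r) = h₁·C_H(r+s−1, r−1) + h₂·C_H(r+s−1, r) holds. -/

import Mathlib

/-- The `F`-factorial: `ffact F 0 = 1`, `ffact F n = F n * F (n-1) * ... * F 1`. -/
def ffact {K : Type*} [Field K] (F : ℕ → K) : ℕ → K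
  | 0 => 1
  | n + 1 => F (n + 1) * ffact F n

/-- The `F`-binomial coefficient `C_F(n, k) = F_n! / (F_k! * F_{n-k}!)`. -/
def fbinom {K : Type*} [Field K] (F : ℕ → K) (n k : ℕ) : K :=
  ffact F n / (ffact F k * ffact F (n - k))

/- Peeling the top factor off `H_{r+s}!` gives
`H_{r+s} · C_H(r+s-1, r-1) = H_r · C_H(r+s, r)` and `H_{r+s} · C_H(r+s-1, r) = H_s · C_H(r+s, r)`.
Multiplying the binomial recurrence by `H_{r+s} ≠ 0` therefore turns it into
`C_H(r+s, r) · H_{r+s} = C_H(r+s, r) · (h₁ H_r + h₂ H_s)`, and `C_H(r+s, r) ≠ 0` cancels. -/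

section

variable {K : Type*} [Field K] (F : ℕ → K)

theorem ffact_succ (n : ℕ) : ffact F (n + 1) = F (n + 1) * ffact F n := rfl

variable {F}

theorem ffact_ne_zero (hF : ∀ k, F (k + 1) ≠ 0) : ∀ n, ffact F n ≠ 0
  | 0 => one_ne_zero
  | n + 1 => mul_ne_zero (hF n) (ffact_ne_zero hF n)

theorem fbinom_ne_zero (hF : ∀ k, F (k + 1) ≠ 0) (n k : ℕ) : fbinom F n k ≠ 0 :=
  div_ne_zero (ffact_ne_zero hF n) (mul_ne_zero (ffact_ne_zero hF k) (ffact_ne_zero hF _))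

theorem mul_fbinom_eq_fbinom_succ_mul_left {k m : ℕ} (hk : F (k + 1) ≠ 0) :
    F (k + m + 1) * fbinom F (k + m) k = fbinom F (k + m + 1) (k + 1) * F (k + 1) := by
  simp only [fbinom, ffact_succ, Nat.add_sub_add_right, Nat.add_sub_cancel_left]
  field_simp

theorem mul_fbinom_eq_fbinom_succ_mul_right {k m : ℕ} (hm : F (m + 1) ≠ 0) :
    F (k + m + 1) * fbinom F (k + m) k = fbinom F (k + m + 1) k * F (m + 1) := by
  simp only [fbinom, ffact_succ, Nat.add_sub_cancel_left, show k + m + 1 - k = m + 1 by omega]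
  field_simp

end

theorem stmt1_general {K : Type*} [Field K]
    (H : ℕ → K)
    (hHne : ∀ n, 1 ≤ n → H n ≠ 0) (r s : ℕ) (hr : 1 ≤ r) (hs : 1 ≤ s)
    (h₁ h₂ : K) :
    H (r + s) = h₁ * H r + h₂ * H s ↔
      fbinom H (r + s) r =
        h₁ * fbinom H (r + s - 1) (r - 1) + h₂ * fbinom H (r + s - 1) r := by
  have hH : ∀ k, H (k + 1) ≠ 0 := fun k => hHne (k + 1) (Nat.le_add_left 1 k)
  obtain ⟨a, rfl⟩ := Nat.exists_eq_add_of_le' hr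
  obtain ⟨b, rfl⟩ := Nat.exists_eq_add_of_le' hs
  have h_left := mul_fbinom_eq_fbinom_succ_mul_left (F := H) (m := b + 1) (hH a)
  have h_right := mul_fbinom_eq_fbinom_succ_mul_right (F := H) (k := a + 1) (hH b)
  rw [show a + (b + 1) = a + 1 + b by omega] at h_left
  have key : H (a + 1 + b + 1) * (h₁ * fbinom H (a + 1 + b) a + h₂ * fbinom H (a + 1 + b) (a + 1))
      = fbinom H (a + 1 + b + 1) (a + 1) * (h₁ * H (a + 1) + h₂ * H (b + 1)) := by
    linear_combination h₁ * h_left + h₂ * h_right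
  simp only [← add_assoc, Nat.add_sub_cancel]
  rw [← mul_right_inj' (fbinom_ne_zero hH _ _), ← key, mul_comm _ (H _), mul_right_inj' (hH _)]

theorem stmt1 {K : Type*} [Field K] [CharZero K] (A B p q : K)
    (hA : A ≠ 0) (hB : B ≠ 0) (hp : p ≠ 0) (hq : q ≠ 0) (hpq : p ≠ q)
    (H : ℕ → K) (hH : ∀ n, H n = A * p ^ n + B * q ^ n)
    (hHne : ∀ n, 1 ≤ n → H n ≠ 0) (r s : ℕ) (hr : 1 ≤ r) (hs : 1 ≤ s)
    (h₁ h₂ : K) :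
    H (r + s) = h₁ * H r + h₂ * H s ↔
      fbinom H (r + s) r =
        h₁ * fbinom H (r + s - 1) (r - 1) + h₂ * fbinom H (r + s - 1) r :=
  stmt1_general H hHne r s hr hs h₁ h₂
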